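/- Let v, C : ℝ × ℝ³ → ℝ³ be smooth with v divergence-free (∇·v(t,·) = 0), C divergence-free (∇·C(t,·) = 0), and C satisfying the frozen-field equation ∂C/∂t = ∇×(v×C). Then for every smooth λ : ℝ × ℝ³ → ℝ, setting χ := ∂λ/∂t + v·∇λ, one has (∂/∂t + v·∇)(∇λ·C) = C·∇χ at every point. In particular, if C is everywhere tangent to the level surfaces of χ (i.e. C·∇χ = 0), then the Eulerian conservation law for the density ∇λ·C degenerates into the Lagrangian one: ∂(∇λ·C)/∂t + v·∇(∇λ·C) = 0, so ∇λ·C is conserved at each point along trajectories, even when λ itself is not conserved. -/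

import Mathlib

noncomputable section

open Matrix MeasureTheory

/-- Points of `ℝ³`, as functions `Fin 3 → ℝ`. -/
abbrev V3 : Type := Fin 3 → ℝ

/-- The `i`-th standard basis vector of `ℝ³`. -/
def e3 (i : Fin 3) : V3 := Pi.single i 1

/-- Time derivative `∂f/∂t` of a time-dependent scalar field on `ℝ × ℝ³`. -/
def dtS (f : ℝ × V3 → ℝ) (q : ℝ × V3) : ℝ :=
  deriv (fun s => f (s, q.2)) q.1

/-- Spatial partial derivative `∂f/∂xᵢ` of a time-dependent scalar field. -/
def pd (i : Fin 3) (f : ℝ × V3 → ℝ) (q : ℝ × V3) : ℝ :=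
  fderiv ℝ (fun y => f (q.1, y)) q.2 (e3 i)

/-- Spatial gradient `∇f`. -/
def grad3 (f : ℝ × V3 → ℝ) (q : ℝ × V3) : V3 := fun i => pd i f q

/-- Time derivative `∂u/∂t` of a time-dependent vector field, componentwise. -/
def dtV (u : ℝ × V3 → V3) (q : ℝ × V3) : V3 := fun i => dtS (fun r => u r i) q

/-- Spatial divergence `∇·u`. -/
def div3 (u : ℝ × V3 → V3) (q : ℝ × V3) : ℝ := ∑ i, pd i (fun r => u r i) q

/-- Spatial curl `∇×u`. -/
def curl3 (u : ℝ × V3 → V3) (q : ℝ × V3) : V3 :=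
  ![pd 1 (fun r => u r 2) q - pd 2 (fun r => u r 1) q,
    pd 2 (fun r => u r 0) q - pd 0 (fun r => u r 2) q,
    pd 0 (fun r => u r 1) q - pd 1 (fun r => u r 0) q]

/-- Directional derivative `(v·∇)w` of a vector field along another. -/
def dirD (v w : ℝ × V3 → V3) (q : ℝ × V3) : V3 :=
  fun i => ∑ j, v q j * pd j (fun r => w r i) q

/-- Advective derivative `v·∇f` of a scalar field along `v`. -/
def adv (v : ℝ × V3 → V3) (f : ℝ × V3 → ℝ) (q : ℝ × V3) : ℝ :=
  ∑ j, v q j * pd j f q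
private lemma pd_eq (f : ℝ × V3 → ℝ) (q : ℝ × V3) (hf : DifferentiableAt ℝ f q) (i : Fin 3) :
    pd i f q = fderiv ℝ f q (0, e3 i) := by
  have h1 : HasFDerivAt (fun y : V3 => (q.1, y)) (ContinuousLinearMap.inr ℝ ℝ V3) q.2 :=
    hasFDerivAt_prodMk_right q.1 q.2
  have h2 : HasFDerivAt (fun y : V3 => f (q.1, y))
      ((fderiv ℝ f q).comp (ContinuousLinearMap.inr ℝ ℝ V3)) q.2 := by
    exact hf.hasFDerivAt.comp q.2 h1
  rw [pd, h2.fderiv]; rfl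

private lemma dtS_eq (f : ℝ × V3 → ℝ) (q : ℝ × V3) (hf : DifferentiableAt ℝ f q) :
    dtS f q = fderiv ℝ f q (1, 0) := by
  have h1 : HasFDerivAt (fun s : ℝ => (s, q.2)) (ContinuousLinearMap.inl ℝ ℝ V3) q.1 :=
    hasFDerivAt_prodMk_left q.1 q.2
  have h2 : HasFDerivAt (fun s : ℝ => f (s, q.2))
      ((fderiv ℝ f q).comp (ContinuousLinearMap.inl ℝ ℝ V3)) q.1 := by
    exact hf.hasFDerivAt.comp q.1 h1
  rw [dtS, h2.hasDerivAt.deriv]; rfl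

private lemma hle_aux : ((⊤:ℕ∞) : WithTop ℕ∞) + 1 ≤ ((⊤:ℕ∞) : WithTop ℕ∞) := by
  exact_mod_cast (le_top : (⊤:ℕ∞) + 1 ≤ ⊤)

private lemma hle1_aux : ((⊤:ℕ∞) : WithTop ℕ∞) ≠ 0 := by
  simp

private lemma contDiff_fderiv_apply {f : ℝ × V3 → ℝ} (hf : ContDiff ℝ (⊤:ℕ∞) f) (w : ℝ × V3) :
    ContDiff ℝ (⊤:ℕ∞) fun r => fderiv ℝ f r w :=
  (hf.fderiv_right hle_aux).clm_apply contDiff_const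

private lemma fderiv_fderiv_apply {f : ℝ × V3 → ℝ} (hf : ContDiff ℝ (⊤:ℕ∞) f) (q w u : ℝ × V3) :
    fderiv ℝ (fun r => fderiv ℝ f r w) q u = fderiv ℝ (fderiv ℝ f) q u w := by
  have h1 : HasFDerivAt (fderiv ℝ f) (fderiv ℝ (fderiv ℝ f) q) q :=
    (((hf.fderiv_right hle_aux).differentiable hle1_aux) q).hasFDerivAt
  have h2 := h1.clm_apply (hasFDerivAt_const w q)
  rw [h2.fderiv]; simp

private lemma fderiv_symm {f : ℝ × V3 → ℝ} (hf : ContDiff ℝ (⊤:ℕ∞) f) (q u w : ℝ × V3) :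
    fderiv ℝ (fderiv ℝ f) q u w = fderiv ℝ (fderiv ℝ f) q w u :=
  second_derivative_symmetric (fun y => ((hf.differentiable hle1_aux) y).hasFDerivAt)
    (((hf.fderiv_right hle_aux).differentiable hle1_aux) q).hasFDerivAt u w

private lemma fderiv_mul_apply {f g : ℝ × V3 → ℝ} {q : ℝ × V3} (hf : DifferentiableAt ℝ f q)
    (hg : DifferentiableAt ℝ g q) (w : ℝ × V3) :
    fderiv ℝ (fun r => f r * g r) q w = fderiv ℝ f q w * g q + f q * fderiv ℝ g q w := by
  rw [fderiv_fun_mul hf hg]; simp; ring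

private lemma fderiv_sub_apply {f g : ℝ × V3 → ℝ} {q : ℝ × V3} (hf : DifferentiableAt ℝ f q)
    (hg : DifferentiableAt ℝ g q) (w : ℝ × V3) :
    fderiv ℝ (fun r => f r - g r) q w = fderiv ℝ f q w - fderiv ℝ g q w := by
  rw [fderiv_fun_sub hf hg]; simp

private lemma apply_W (L : (ℝ × V3) →L[ℝ] ℝ) (x : V3) :
    L (1, x) = L (1, 0) + ∑ j, x j * L (0, e3 j) := by
  have hx : ((1 : ℝ), x) = (1, 0) + ∑ j, x j • ((0 : ℝ), e3 j) := by
    refine Prod.ext ?_ ?_ <;> simp [Fin.sum_univ_three]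
    funext k
    simp [e3, Fin.sum_univ_three, Pi.single_apply]
    fin_cases k <;> simp
  rw [hx, map_add, map_sum]
  congr 1
  refine Finset.sum_congr rfl fun j _ => ?_
  rw [L.map_smul]; simp

private lemma apply_0 (L : (ℝ × V3) →L[ℝ] ℝ) (x : V3) :
    L (0, x) = ∑ j, x j * L (0, e3 j) := by
  have h := apply_W L x
  have h2 : ((1:ℝ), x) = (1, 0) + ((0:ℝ), x) := by simp
  rw [h2, map_add] at h; linarith

private lemma proj_fderiv {u : ℝ × V3 → V3} {q : ℝ × V3} (hu : DifferentiableAt ℝ u q)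
    (j : Fin 3) (z : ℝ × V3) :
    fderiv ℝ (fun r => u r j) q z = fderiv ℝ u q z j := by
  have h : HasFDerivAt (fun r => u r j)
      ((ContinuousLinearMap.proj (R := ℝ) (φ := fun _ : Fin 3 => ℝ) j).comp (fderiv ℝ u q)) q :=
    (ContinuousLinearMap.proj (R := ℝ) (φ := fun _ : Fin 3 => ℝ) j).hasFDerivAt.comp q
      hu.hasFDerivAt
  rw [h.fderiv]; rfl


/-- Let `v` and `C` be divergence-free with `C` frozen-in
(`∂C/∂t = ∇×(v×C)`). For every smooth `λ`, with `χ = ∂λ/∂t + v·∇λ`, one has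
`(∂/∂t + v·∇)(∇λ·C) = C·∇χ` everywhere; in particular, if `C` is everywhere tangent to
the level surfaces of `χ` (`C·∇χ = 0`), then `∇λ·C` is a Lagrangian invariant:
`∂(∇λ·C)/∂t + v·∇(∇λ·C) = 0`, even when `λ` itself is not conserved. -/
theorem eulerian_degenerates_to_lagrangian
    (v C : ℝ × V3 → V3)
    (hv : ContDiff ℝ (⊤ : ℕ∞) v) (hC : ContDiff ℝ (⊤ : ℕ∞) C)
    (hdv : ∀ q, div3 v q = 0)
    (hdC : ∀ q, div3 C q = 0)
    (hfrozen : ∀ q i, dtV C q i = curl3 (fun r => crossProduct (v r) (C r)) q i) :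
    ∀ lam : ℝ × V3 → ℝ, ContDiff ℝ (⊤ : ℕ∞) lam →
      ((∀ q, dtS (fun r => grad3 lam r ⬝ᵥ C r) q + adv v (fun r => grad3 lam r ⬝ᵥ C r) q
          = C q ⬝ᵥ grad3 (fun r => dtS lam r + adv v lam r) q) ∧
       ((∀ q, C q ⬝ᵥ grad3 (fun r => dtS lam r + adv v lam r) q = 0) →
        ∀ q, dtS (fun r => grad3 lam r ⬝ᵥ C r) q
           + adv v (fun r => grad3 lam r ⬝ᵥ C r) q = 0)) := by
  intro lam hlam
  have hv' : ContDiff ℝ (⊤:ℕ∞) v := hv.of_le (by simp)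
  have hC' : ContDiff ℝ (⊤:ℕ∞) C := hC.of_le (by simp)
  have hlam' : ContDiff ℝ (⊤:ℕ∞) lam := hlam.of_le (by simp)
  have hlamd : ∀ r, DifferentiableAt ℝ lam r := fun r => (hlam'.differentiable hle1_aux) r
  have hCc : ∀ i : Fin 3, ContDiff ℝ (⊤:ℕ∞) (fun r => C r i) := fun i =>
    (ContinuousLinearMap.proj (R := ℝ) (φ := fun _ : Fin 3 => ℝ) i).contDiff.comp hC'
  have hvc : ∀ i : Fin 3, ContDiff ℝ (⊤:ℕ∞) (fun r => v r i) := fun i =>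
    (ContinuousLinearMap.proj (R := ℝ) (φ := fun _ : Fin 3 => ℝ) i).contDiff.comp hv'
  have hCd : ∀ (i : Fin 3) (r : ℝ × V3), DifferentiableAt ℝ (fun s => C s i) r := fun i r =>
    ((hCc i).differentiable hle1_aux) r
  have hvd : ∀ (i : Fin 3) (r : ℝ × V3), DifferentiableAt ℝ (fun s => v s i) r := fun i r =>
    ((hvc i).differentiable hle1_aux) r
  set g : ℝ × V3 → ℝ := fun r => ∑ i, fderiv ℝ lam r (0, e3 i) * C r i with hgdef
  have hgsm : ContDiff ℝ (⊤:ℕ∞) g := ContDiff.sum fun i _ =>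
    (contDiff_fderiv_apply hlam' _).mul (hCc i)
  have hgd : ∀ r, DifferentiableAt ℝ g r := fun r => (hgsm.differentiable hle1_aux) r
  have hgeq : (fun r => grad3 lam r ⬝ᵥ C r) = g := by
    funext r
    simp only [dotProduct, grad3, hgdef]
    exact Finset.sum_congr rfl fun i _ => by rw [pd_eq lam r (hlamd r) i]
  set χ : ℝ × V3 → ℝ := fun r => fderiv ℝ lam r (1, v r) with hχdef
  have hχeq : (fun r => dtS lam r + adv v lam r) = χ := by
    funext r
    show dtS lam r + adv v lam r = fderiv ℝ lam r (1, v r)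
    rw [dtS_eq lam r (hlamd r), adv]
    have hs : ∑ j, v r j * pd j lam r = ∑ j, v r j * fderiv ℝ lam r (0, e3 j) :=
      Finset.sum_congr rfl fun j _ => by rw [pd_eq lam r (hlamd r) j]
    rw [hs, ← apply_W (fderiv ℝ lam r) (v r)]
  have hχsm : ContDiff ℝ (⊤:ℕ∞) χ :=
    (hlam'.fderiv_right hle_aux).clm_apply (contDiff_const.prodMk hv')
  have key : ∀ q, dtS g q + adv v g q = C q ⬝ᵥ grad3 χ q := by
    intro q
    have hdvq : fderiv ℝ (fun r => v r 0) q (0, e3 0) + fderiv ℝ (fun r => v r 1) q (0, e3 1)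
        + fderiv ℝ (fun r => v r 2) q (0, e3 2) = 0 := by
      have h := hdv q
      rw [div3, Fin.sum_univ_three, pd_eq _ q (hvd 0 q) 0, pd_eq _ q (hvd 1 q) 1,
        pd_eq _ q (hvd 2 q) 2] at h
      exact h
    have hdCq : fderiv ℝ (fun r => C r 0) q (0, e3 0) + fderiv ℝ (fun r => C r 1) q (0, e3 1)
        + fderiv ℝ (fun r => C r 2) q (0, e3 2) = 0 := by
      have h := hdC q
      rw [div3, Fin.sum_univ_three, pd_eq _ q (hCd 0 q) 0, pd_eq _ q (hCd 1 q) 1,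
        pd_eq _ q (hCd 2 q) 2] at h
      exact h
    have pdc : ∀ (i a b c d : Fin 3),
        pd i (fun r => v r a * C r b - v r c * C r d) q
        = (fderiv ℝ (fun r => v r a) q (0, e3 i) * C q b
            + v q a * fderiv ℝ (fun r => C r b) q (0, e3 i))
          - (fderiv ℝ (fun r => v r c) q (0, e3 i) * C q d
            + v q c * fderiv ℝ (fun r => C r d) q (0, e3 i)) := by
      intro i a b c d
      rw [pd_eq _ q (((hvd a q).fun_mul (hCd b q)).fun_sub ((hvd c q).fun_mul (hCd d q))) i,
        fderiv_sub_apply ((hvd a q).fun_mul (hCd b q)) ((hvd c q).fun_mul (hCd d q)),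
        fderiv_mul_apply (hvd a q) (hCd b q), fderiv_mul_apply (hvd c q) (hCd d q)]
    have hcr : (fun r => (crossProduct (v r)) (C r)) = fun r =>
        ![v r 1 * C r 2 - v r 2 * C r 1, v r 2 * C r 0 - v r 0 * C r 2,
          v r 0 * C r 1 - v r 1 * C r 0] := by
      funext r; rw [cross_apply]
    have hstep : ∀ i : Fin 3, fderiv ℝ (fun r => C r i) q (1, 0) = curl3 (fun r =>
        ![v r 1 * C r 2 - v r 2 * C r 1, v r 2 * C r 0 - v r 0 * C r 2,
          v r 0 * C r 1 - v r 1 * C r 0]) q i := by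
      intro i
      have h1 := hfrozen q i
      simp only [dtV] at h1
      rw [dtS_eq _ q (hCd i q)] at h1
      rw [hcr] at h1
      exact h1
    have hfroz0 : fderiv ℝ (fun r => C r 0) q (1, v q)
        = ∑ j, C q j * fderiv ℝ (fun r => v r 0) q (0, e3 j) := by
      have h1 := hstep 0
      simp only [curl3, Matrix.cons_val_zero, Matrix.cons_val_one, Matrix.head_cons,
        Matrix.cons_val_two, Matrix.tail_cons] at h1
      simp only [pdc] at h1
      rw [apply_W, Fin.sum_univ_three, Fin.sum_univ_three]
      linear_combination h1 + v q 0 * hdCq - C q 0 * hdvq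
    have hfroz1 : fderiv ℝ (fun r => C r 1) q (1, v q)
        = ∑ j, C q j * fderiv ℝ (fun r => v r 1) q (0, e3 j) := by
      have h1 := hstep 1
      simp only [curl3, Matrix.cons_val_zero, Matrix.cons_val_one, Matrix.head_cons,
        Matrix.cons_val_two, Matrix.tail_cons] at h1
      simp only [pdc] at h1
      rw [apply_W, Fin.sum_univ_three, Fin.sum_univ_three]
      linear_combination h1 + v q 1 * hdCq - C q 1 * hdvq
    have hfroz2 : fderiv ℝ (fun r => C r 2) q (1, v q)
        = ∑ j, C q j * fderiv ℝ (fun r => v r 2) q (0, e3 j) := by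
      have h1 := hstep 2
      simp only [curl3, Matrix.cons_val_zero, Matrix.cons_val_one, Matrix.head_cons,
        Matrix.cons_val_two, Matrix.tail_cons] at h1
      simp only [pdc] at h1
      rw [apply_W, Fin.sum_univ_three, Fin.sum_univ_three]
      linear_combination h1 + v q 2 * hdCq - C q 2 * hdvq
    have h1 : dtS g q = fderiv ℝ g q (1, 0) := dtS_eq _ _ (hgd q)
    have h2 : adv v g q = ∑ j, v q j * fderiv ℝ g q (0, e3 j) := by
      rw [adv]
      exact Finset.sum_congr rfl fun j _ => by rw [pd_eq _ q (hgd q) j]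
    have hLHS : dtS g q + adv v g q = fderiv ℝ g q (1, v q) := by
      rw [h1, h2, apply_W (fderiv ℝ g q) (v q)]
    have hDg : fderiv ℝ g q (1, v q)
        = ∑ i, (fderiv ℝ (fderiv ℝ lam) q (0, e3 i) (1, v q) * C q i
            + fderiv ℝ lam q (0, e3 i) * fderiv ℝ (fun r => C r i) q (1, v q)) := by
      have hsum : fderiv ℝ g q
          = ∑ i, fderiv ℝ (fun r => fderiv ℝ lam r (0, e3 i) * C r i) q := by
        rw [hgdef]
        exact fderiv_fun_sum fun i _ =>
          ((contDiff_fderiv_apply hlam' _).differentiable hle1_aux q).mul (hCd i q)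
      rw [hsum, ContinuousLinearMap.sum_apply]
      refine Finset.sum_congr rfl fun i _ => ?_
      rw [fderiv_mul_apply ((contDiff_fderiv_apply hlam' _).differentiable hle1_aux q)
        (hCd i q), fderiv_fderiv_apply hlam' q _ _, fderiv_symm hlam' q _ _]
    have hχd : ∀ i : Fin 3, fderiv ℝ χ q (0, e3 i)
        = (∑ j, fderiv ℝ (fun r => v r j) q (0, e3 i) * fderiv ℝ lam q (0, e3 j))
          + fderiv ℝ (fderiv ℝ lam) q (0, e3 i) (1, v q) := by
      intro i
      have hc : HasFDerivAt (fderiv ℝ lam) (fderiv ℝ (fderiv ℝ lam) q) q :=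
        (((hlam'.fderiv_right hle_aux).differentiable hle1_aux) q).hasFDerivAt
      have hu : HasFDerivAt (fun r : ℝ × V3 => ((1:ℝ), v r))
          ((0 : (ℝ × V3) →L[ℝ] ℝ).prod (fderiv ℝ v q)) q :=
        (hasFDerivAt_const (1:ℝ) q).prodMk ((hv'.differentiable hle1_aux) q).hasFDerivAt
      have h3 := hc.clm_apply hu
      rw [hχdef, h3.fderiv]
      simp only [ContinuousLinearMap.add_apply, ContinuousLinearMap.coe_comp',
        Function.comp_apply, ContinuousLinearMap.flip_apply,
        ContinuousLinearMap.prod_apply, ContinuousLinearMap.zero_apply]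
      rw [apply_0 (fderiv ℝ lam q) (fderiv ℝ v q (0, e3 i))]
      congr 1
      refine Finset.sum_congr rfl fun j _ => ?_
      rw [proj_fderiv ((hv'.differentiable hle1_aux) q) j]
    have hRHS : C q ⬝ᵥ grad3 χ q = ∑ i, C q i *
        ((∑ j, fderiv ℝ (fun r => v r j) q (0, e3 i) * fderiv ℝ lam q (0, e3 j))
          + fderiv ℝ (fderiv ℝ lam) q (0, e3 i) (1, v q)) := by
      simp only [dotProduct, grad3]
      refine Finset.sum_congr rfl fun i _ => ?_
      rw [pd_eq _ q ((hχsm.differentiable hle1_aux) q) i, hχd i]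
    rw [hLHS, hDg, hRHS]
    simp only [Fin.sum_univ_three]
    rw [hfroz0, hfroz1, hfroz2]
    simp only [Fin.sum_univ_three]
    ring
  constructor
  · intro q
    rw [hgeq, hχeq]
    exact key q
  · intro h0 q
    rw [hgeq, key q, ← hχeq]
    exact h0 q
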